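/- Let A be an integral domain with quotient field K and let E be a nonzero A-submodule of K with E·E ⊆ E. Then the amalgamated duplication A ⋈ E is an elementary divisor ring if and only if A is an elementary divisor ring and A ⊆ E. -/

import Mathlib

/-- A commutative ring is an elementary divisor ring if every square matrix is
equivalent to a diagonal matrix via invertible matrices. -/
def IsElementaryDivisorRing (R : Type*) [CommRing R] : Prop :=
  ∀ (n : ℕ) (M : Matrix (Fin n) (Fin n) R),
    ∃ P Q : Matrix (Fin n) (Fin n) R, IsUnit P ∧ IsUnit Q ∧
      ∃ d : Fin n → R, P * M * Q = Matrix.diagonal d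

/-- A commutative ring is Hermite if any pair `a, b` can be written `a = a₁d`,
`b = b₁d` with `Ra₁ + Rb₁ = R`. -/
def IsHermiteRing (R : Type*) [CommRing R] : Prop :=
  ∀ a b : R, ∃ a₁ b₁ d : R, a = a₁ * d ∧ b = b₁ * d ∧ Ideal.span {a₁, b₁} = ⊤

/-- The amalgamation `A ⋈^f J = {(a, f a + j) | a ∈ A, j ∈ J}` as a subring of `A × B`. -/
def amalgamation {A B : Type*} [CommRing A] [CommRing B] (f : A →+* B) (J : Ideal B) :
    Subring (A × B) where
  carrier := {p | p.2 - f p.1 ∈ J}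
  mul_mem' := by
    intro p q hp hq
    have h : (p * q).2 - f (p * q).1
        = p.2 * (q.2 - f q.1) + f q.1 * (p.2 - f p.1) := by
      simp only [Prod.fst_mul, Prod.snd_mul, map_mul]; ring
    show (p * q).2 - f (p * q).1 ∈ J
    rw [h]
    exact J.add_mem (J.mul_mem_left _ hq) (J.mul_mem_left _ hp)
  one_mem' := by simp
  add_mem' := by
    intro p q hp hq
    have h : (p + q).2 - f (p + q).1 = (p.2 - f p.1) + (q.2 - f q.1) := by
      simp only [Prod.fst_add, Prod.snd_add, map_add]; ring
    show (p + q).2 - f (p + q).1 ∈ J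
    rw [h]
    exact J.add_mem hp hq
  zero_mem' := by simp
  neg_mem' := by
    intro p hp
    have h : (-p).2 - f (-p).1 = -(p.2 - f p.1) := by
      simp only [Prod.fst_neg, Prod.snd_neg, map_neg]; ring
    show (-p).2 - f (-p).1 ∈ J
    rw [h]
    exact J.neg_mem hp

/-- The subring `f(A) + J` of `B`. -/
def rangeAddIdeal {A B : Type*} [CommRing A] [CommRing B] (f : A →+* B) (J : Ideal B) :
    Subring B where
  carrier := {b | ∃ a, b - f a ∈ J}
  mul_mem' := by
    rintro b b' ⟨a, ha⟩ ⟨a', ha'⟩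
    refine ⟨a * a', ?_⟩
    have h : b * b' - f (a * a') = b * (b' - f a') + f a' * (b - f a) := by
      simp only [map_mul]; ring
    show b * b' - f (a * a') ∈ J
    rw [h]
    exact J.add_mem (J.mul_mem_left _ ha') (J.mul_mem_left _ ha)
  one_mem' := ⟨1, by simp⟩
  add_mem' := by
    rintro b b' ⟨a, ha⟩ ⟨a', ha'⟩
    refine ⟨a + a', ?_⟩
    have h : b + b' - f (a + a') = (b - f a) + (b' - f a') := by
      simp only [map_add]; ring
    show b + b' - f (a + a') ∈ J
    rw [h]
    exact J.add_mem ha ha'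
  zero_mem' := ⟨0, by simp⟩
  neg_mem' := by
    rintro b ⟨a, ha⟩
    refine ⟨-a, ?_⟩
    have h : -b - f (-a) = -(b - f a) := by simp only [map_neg]; ring
    show -b - f (-a) ∈ J
    rw [h]
    exact J.neg_mem ha

/-!
Projecting `A ⋈ E` onto its first factor is surjective, and elementary divisor rings pass to
quotients and are Bézout. For `0 ≠ s ∈ A` with `s ∈ E`, a generator `w` of the ideal of `A ⋈ E`
generated by `(s, 0)` and `(0, s)` writes `(0, s) = d w` with `d = (0, d₂)`, so `d₂ ∈ E`, and
`w ∈ ((s, 0), (0, s))` makes `d₂` invertible in `K` with inverse `q₂`, where `(q₁, q₂) ∈ A ⋈ E`;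
then `1 = d₂ (q₂ - q₁) + q₁ d₂ ∈ E`, hence `A ⊆ E`.

Conversely, if `A ⊆ E` then `E` is a ring between `A` and `K` and `A ⋈ E ≅ A × E`. A matrix `Y`
over `E` becomes a matrix over `A` after multiplying by a common denominator `b`, and invertible
`A`-matrices diagonalizing `b Y` also diagonalize `Y`; so `E`, and with it `A × E`, is an
elementary divisor ring.
-/

open Matrix

namespace Matrix

variable {n R S : Type*} [Fintype n] [DecidableEq n] [CommRing R] [CommRing S]

theorem ext_fst_snd {U V : Matrix n n (R × S)}
    (h₁ : (RingHom.fst R S).mapMatrix U = (RingHom.fst R S).mapMatrix V)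
    (h₂ : (RingHom.snd R S).mapMatrix U = (RingHom.snd R S).mapMatrix V) : U = V :=
  ext fun i j => Prod.ext (congrFun₂ h₁ i j) (congrFun₂ h₂ i j)

theorem isUnit_of_isUnit_fst_snd {U : Matrix n n (R × S)}
    (h₁ : IsUnit ((RingHom.fst R S).mapMatrix U)) (h₂ : IsUnit ((RingHom.snd R S).mapMatrix U)) :
    IsUnit U := by
  rw [isUnit_iff_isUnit_det, ← RingHom.map_det] at h₁ h₂
  rw [isUnit_iff_isUnit_det]
  exact Prod.isUnit_iff.2 ⟨h₁, h₂⟩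

end Matrix

theorem Ideal.span_range_vecMul {n R : Type*} [Fintype n] [DecidableEq n] [CommRing R]
    (v : n → R) {Q : Matrix n n R} (hQ : IsUnit Q) :
    Ideal.span (Set.range (v ᵥ* Q)) = Ideal.span (Set.range v) := by
  have key : ∀ (v : n → R) (Q : Matrix n n R),
      Ideal.span (Set.range (v ᵥ* Q)) ≤ Ideal.span (Set.range v) := by
    intro v Q
    rw [Ideal.span_le]
    rintro _ ⟨j, rfl⟩
    exact Ideal.sum_mem _ fun i _ => Ideal.mul_mem_right _ _ (Ideal.subset_span ⟨i, rfl⟩)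
  obtain ⟨Q', hQQ'⟩ := hQ.exists_right_inv
  refine le_antisymm (key v Q) ?_
  calc Ideal.span (Set.range v) = Ideal.span (Set.range (v ᵥ* Q ᵥ* Q')) := by
        rw [vecMul_vecMul, hQQ', vecMul_one]
    _ ≤ _ := key _ _

theorem Ideal.span_pair_eq_span_singleton_add {R : Type*} [CommRing R] {a b e : R}
    (ha : e * a = a) (hb : e * b = 0) : Ideal.span {a, b} = Ideal.span {a + b} := by
  refine le_antisymm ?_ ?_
  · rw [Ideal.span_le, Set.insert_subset_iff, Set.singleton_subset_iff]
    exact ⟨Ideal.mem_span_singleton'.2 ⟨e, by linear_combination ha + hb⟩,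
      Ideal.mem_span_singleton'.2 ⟨1 - e, by linear_combination -ha - hb⟩⟩
  · rw [Ideal.span_singleton_le_iff_mem]
    exact Ideal.add_mem _ (Ideal.subset_span (by simp)) (Ideal.subset_span (by simp))

namespace IsElementaryDivisorRing

variable {R S : Type*} [CommRing R] [CommRing S]

theorem of_surjective (hR : IsElementaryDivisorRing R) (g : R →+* S)
    (hg : Function.Surjective g) : IsElementaryDivisorRing S := by
  intro n M
  obtain ⟨P, Q, hP, hQ, d, hd⟩ := hR n (M.map (Function.surjInv hg))
  refine ⟨g.mapMatrix P, g.mapMatrix Q, hP.map _, hQ.map _, g ∘ d, ?_⟩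
  have hM : g.mapMatrix (M.map (Function.surjInv hg)) = M := by
    ext i j; exact Function.surjInv_eq hg _
  rw [← hM, ← map_mul, ← map_mul, hd, RingHom.mapMatrix_apply, diagonal_map (map_zero g)]
  rfl

theorem prod (hR : IsElementaryDivisorRing R) (hS : IsElementaryDivisorRing S) :
    IsElementaryDivisorRing (R × S) := by
  intro n M
  obtain ⟨P₁, Q₁, hP₁, hQ₁, d₁, hd₁⟩ := hR n ((RingHom.fst R S).mapMatrix M)
  obtain ⟨P₂, Q₂, hP₂, hQ₂, d₂, hd₂⟩ := hS n ((RingHom.snd R S).mapMatrix M)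
  refine ⟨of fun i j => (P₁ i j, P₂ i j), of fun i j => (Q₁ i j, Q₂ i j),
    isUnit_of_isUnit_fst_snd hP₁ hP₂, isUnit_of_isUnit_fst_snd hQ₁ hQ₂, fun i => (d₁ i, d₂ i),
    ext_fst_snd ?_ ?_⟩
  · rw [map_mul, map_mul, RingHom.mapMatrix_apply _ (diagonal _), diagonal_map rfl]
    exact hd₁
  · rw [map_mul, map_mul, RingHom.mapMatrix_apply _ (diagonal _), diagonal_map rfl]
    exact hd₂

theorem isBezout (h : IsElementaryDivisorRing R) : IsBezout R := by
  refine IsBezout.iff_span_pair_isPrincipal.2 fun x y => ?_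
  obtain ⟨P, Q, hP, hQ, d, hd⟩ := h 2 !![x, y; 0, 0]
  set w := ![x, y] ᵥ* Q
  have hspan : Ideal.span {w 0, w 1} = Ideal.span {x, y} := by
    have hw : Set.range w = {w 0, w 1} := by
      rw [← range_cons_cons_empty (w 0) (w 1) ![]]; congr; ext i; fin_cases i <;> rfl
    rw [← hw, Ideal.span_range_vecMul _ hQ, range_cons_cons_empty]
  -- the only nonzero row of the matrix is `(x, y)`, so `P M Q` has entries `P i 0 * w j`
  have hentry : ∀ i j, P i 0 * w j = diagonal d i j := by
    intro i j
    rw [← hd]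
    simp only [w, vecMul, dotProduct, Matrix.mul_apply, Fin.sum_univ_two, of_apply,
      cons_val', cons_val_zero, cons_val_one, cons_val_fin_one, mul_zero, add_zero]
    ring
  have h01 := hentry 0 1
  have h10 := hentry 1 0
  simp only [diagonal_apply_ne _ (by decide : (0 : Fin 2) ≠ 1),
    diagonal_apply_ne _ (by decide : (1 : Fin 2) ≠ 0)] at h01 h10
  obtain ⟨t, ht⟩ := ((isUnit_iff_isUnit_det P).1 hP).exists_left_inv
  rw [det_fin_two] at ht
  -- `t = (det P)⁻¹`, so `t P₀₀ P₁₁` fixes `w 0` and kills `w 1`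
  rw [← hspan, Ideal.span_pair_eq_span_singleton_add (e := t * P 0 0 * P 1 1)
    (by linear_combination w 0 * ht + t * P 0 1 * h10) (by linear_combination t * P 1 1 * h01)]
  exact ⟨⟨_, rfl⟩⟩

theorem subalgebra_of_isLocalization {A K : Type*} [CommRing A] [CommRing K] [Algebra A K]
    (M : Submonoid A) [IsLocalization M K] (hA : IsElementaryDivisorRing A)
    (S : Subalgebra A K) : IsElementaryDivisorRing S := by
  intro n Y
  set Y' := S.val.toRingHom.mapMatrix Y
  obtain ⟨b, hb⟩ := IsLocalization.exist_integer_multiples_of_finite M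
    (fun p : Fin n × Fin n => Y' p.1 p.2)
  choose N hN using hb
  obtain ⟨P, Q, hP, hQ, d, hd⟩ := hA n (of fun i j => N (i, j))
  set Z := (algebraMap A S).mapMatrix P * Y * (algebraMap A S).mapMatrix Q
  have hN' : (algebraMap A K).mapMatrix (of fun i j => N (i, j)) = algebraMap A K b • Y' := by
    ext i j; exact (hN (i, j)).trans (Algebra.smul_def _ _)
  have hZ : algebraMap A K b • S.val.toRingHom.mapMatrix Z
      = (algebraMap A K).mapMatrix (diagonal d) := by
    have hval : ∀ X : Matrix (Fin n) (Fin n) A,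
        S.val.toRingHom.mapMatrix ((algebraMap A S).mapMatrix X) = (algebraMap A K).mapMatrix X :=
      fun X => rfl
    rw [← hd, map_mul (algebraMap A K).mapMatrix, map_mul (algebraMap A K).mapMatrix, hN',
      mul_smul_comm, smul_mul, map_mul, map_mul, hval, hval]
  refine ⟨_, _, hP.map _, hQ.map _, Z.diag, (?_ : Z.IsDiag).diagonal_diag.symm⟩
  intro i j hij
  have hbZ : algebraMap A K b * Z i j = 0 := by
    simpa [diagonal_apply_ne _ hij] using congrFun₂ hZ i j
  exact Subtype.ext ((IsLocalization.map_units K b).mul_right_eq_zero.1 hbZ)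

end IsElementaryDivisorRing

theorem Submodule.exists_algebraMap_mem_ne_zero {A K : Type*} [CommRing A] [CommRing K]
    [Algebra A K] (M : Submonoid A) [IsLocalization M K] {E : Submodule A K} (hE : E ≠ ⊥) :
    ∃ s : A, algebraMap A K s ∈ E ∧ algebraMap A K s ≠ 0 := by
  obtain ⟨e, heE, he0⟩ := (Submodule.ne_bot_iff E).1 hE
  obtain ⟨⟨s, t⟩, hst⟩ := IsLocalization.surj M e
  refine ⟨s, ?_, ?_⟩
  · rw [← hst, mul_comm, ← Algebra.smul_def]
    exact E.smul_mem _ heE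
  · rw [← hst]
    exact fun h => he0 ((IsLocalization.map_units K t).mul_left_eq_zero.1 h)

section Duplication

variable {A K : Type*} [CommRing A] [CommRing K] [Algebra A K]
  {E : Submodule A K} {D : Subring (A × K)}

theorem fst_comp_subtype_surjective (hD : ∀ p : A × K, p ∈ D ↔ p.2 - algebraMap A K p.1 ∈ E) :
    Function.Surjective ((RingHom.fst A K).comp D.subtype) :=
  fun a => ⟨⟨(a, algebraMap A K a), (hD _).2 (by simp)⟩, rfl⟩

theorem one_mem_of_isBezout [IsDomain A] [IsDomain K]
    (hD : ∀ p : A × K, p ∈ D ↔ p.2 - algebraMap A K p.1 ∈ E)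
    (hE2 : ∀ x ∈ E, ∀ y ∈ E, x * y ∈ E) [IsBezout D] {s : A}
    (hs : algebraMap A K s ∈ E) (hs0 : algebraMap A K s ≠ 0) : (1 : K) ∈ E := by
  let x : D := ⟨(s, 0), (hD _).2 (by simpa using E.neg_mem hs)⟩
  let y : D := ⟨(0, algebraMap A K s), (hD _).2 (by simpa using hs)⟩
  obtain ⟨w, hw⟩ := (IsBezout.span_pair_isPrincipal x y).principal
  obtain ⟨c, hc⟩ := Ideal.mem_span_singleton'.1 (hw ▸ Ideal.subset_span (by simp) : x ∈ _)
  obtain ⟨d, hd⟩ := Ideal.mem_span_singleton'.1 (hw ▸ Ideal.subset_span (by simp) : y ∈ _)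
  obtain ⟨p, q, hpq⟩ := Ideal.mem_span_pair.1 (hw ▸ Ideal.mem_span_singleton_self w :
    w ∈ Ideal.span {x, y})
  have hc₁ : c.1.1 * w.1.1 = s := congrArg (fun z : D => z.1.1) hc
  have hd₁ : d.1.1 * w.1.1 = 0 := congrArg (fun z : D => z.1.1) hd
  have hd₂ : d.1.2 * w.1.2 = algebraMap A K s := congrArg (fun z : D => z.1.2) hd
  have hq₂ : q.1.2 * algebraMap A K s = w.1.2 := by
    simpa [x, y] using congrArg (fun z : D => z.1.2) hpq
  have hd₁0 : d.1.1 = 0 := by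
    refine (mul_eq_zero.1 hd₁).resolve_right fun h => hs0 ?_
    rw [← hc₁, h, mul_zero, map_zero]
  have hdE : d.1.2 ∈ E := by simpa [hd₁0] using (hD d.1).1 d.2
  have hdq : d.1.2 * q.1.2 = 1 := by
    refine mul_right_cancel₀ hs0 ?_
    linear_combination d.1.2 * hq₂ + hd₂
  have hqE : q.1.2 - algebraMap A K q.1.1 ∈ E := (hD q.1).1 q.2
  have h1 : (1 : K) = d.1.2 * (q.1.2 - algebraMap A K q.1.1) + q.1.1 • d.1.2 := by
    rw [Algebra.smul_def]; linear_combination -hdq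
  rw [h1]
  exact E.add_mem (hE2 _ hdE _ hqE) (E.smul_mem _ hdE)

theorem isElementaryDivisorRing_of_algebraMap_mem (M : Submonoid A) [IsLocalization M K]
    (hD : ∀ p : A × K, p ∈ D ↔ p.2 - algebraMap A K p.1 ∈ E)
    (hE2 : ∀ x ∈ E, ∀ y ∈ E, x * y ∈ E) (hA : IsElementaryDivisorRing A)
    (hAE : ∀ a : A, algebraMap A K a ∈ E) : IsElementaryDivisorRing D := by
  let S := E.toSubalgebra (by simpa using hAE 1) fun x y hx hy => hE2 x hx y hy
  let g : A × S →+* D := RingHom.codRestrict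
    ((RingHom.fst A S).prod (S.val.toRingHom.comp (RingHom.snd A S))) D
    fun p => (hD _).2 (E.sub_mem p.2.2 (hAE _))
  refine (hA.prod (hA.subalgebra_of_isLocalization M S)).of_surjective g fun p => ?_
  have hp : p.1.2 ∈ E := by
    simpa using E.add_mem ((hD p.1).1 p.2) (hAE p.1.1)
  exact ⟨(p.1.1, ⟨p.1.2, hp⟩), rfl⟩

end Duplication

theorem stmt12 {A : Type*} [CommRing A] [IsDomain A]
    (E : Submodule A (FractionRing A)) (hE : E ≠ ⊥)
    (hE2 : ∀ x ∈ E, ∀ y ∈ E, x * y ∈ E)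
    (D : Subring (A × FractionRing A))
    (hD : ∀ p : A × FractionRing A, p ∈ D ↔ p.2 - algebraMap A (FractionRing A) p.1 ∈ E) :
    IsElementaryDivisorRing D ↔
      IsElementaryDivisorRing A ∧ ∀ a : A, algebraMap A (FractionRing A) a ∈ E := by
  constructor
  · intro hDE
    have := hDE.isBezout
    obtain ⟨s, hs, hs0⟩ := E.exists_algebraMap_mem_ne_zero (nonZeroDivisors A) hE
    have h1 := one_mem_of_isBezout hD hE2 hs hs0
    exact ⟨hDE.of_surjective _ (fst_comp_subtype_surjective hD),
      fun a => by simpa [Algebra.smul_def] using E.smul_mem a h1⟩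
  · rintro ⟨hA, hAE⟩
    exact isElementaryDivisorRing_of_algebraMap_mem (nonZeroDivisors A) hD hE2 hA hAE
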